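/- The sets K, S witnessing the combinator laws for Scott's graph-model application can be chosen computably enumerable: there exist c.e. sets K, S ⊆ ℕ such that for all X, Y, Z ⊆ ℕ, (K·X)·Y = X and ((S·X)·Y)·Z = (X·Z)·(Y·Z); moreover, for all computably enumerable X, Y ⊆ ℕ the set X·Y is computably enumerable. Consequently the computably enumerable subsets of ℕ with Scott's application form a total combinatory algebra ℰ. -/

import Mathlib

/-!
Take `K = {⟨⟨z, v⟩, u⟩ | z ∈ D_u}` and `S = {⟨⟨⟨x, c⟩, b⟩, a⟩ | x ∈ (D_a · D_c) · (D_b · D_c)}`.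
The law for `K` is immediate. For `S`, one inclusion is monotonicity of application, the other
is its continuity: every finite subset of `A · B` already lies in `A' · B'` for some finite
`A' ⊆ A` and `B' ⊆ B`, so `x ∈ (X · Z) · (Y · Z)` is witnessed by finite `a ⊆ X`, `b ⊆ Y`,
`c ⊆ Z`.

For effectivity, write a c.e. set as the union of a monotone primitive recursive sequence of
stages. Then `x ∈ A · B` iff at some stage `k` some `⟨x, u⟩` has entered `A` and all of the finite
set `D_u` has entered `B`; as `D_u` is primitive recursive in `u`, application is c.e. uniformly
in parameters. This gives both the closure of c.e. sets under application and the c.e.-ness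
of `K` and `S`.
-/

/-- Scott's graph-model application on subsets of `ℕ`:
`A · B = {x | ∃ u, ⟨x, u⟩ ∈ A ∧ D_u ⊆ B}`, where `D_u` is the `u`-th finite
set of naturals (via the canonical `Denumerable (Finset ℕ)` coding). -/
def scottApp (A B : Set ℕ) : Set ℕ :=
  {x : ℕ | ∃ u : ℕ, Nat.pair x u ∈ A ∧ (Denumerable.ofNat (Finset ℕ) u : Set ℕ) ⊆ B}

open Denumerable Encodable Filter
open Nat.Partrec (Code)

namespace Denumerable

theorem ofNat_surjective (α : Type*) [Denumerable α] : Function.Surjective (ofNat α) :=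
  (eqv α).symm.surjective

-- `raise'` recurses with a varying offset; this closed form is a plain `foldr`, to which
-- `Primrec.list_foldr` applies.
theorem raise'_eq_map_foldr (l : List ℕ) (n : ℕ) :
    raise' l n = (l.foldr (fun m acc => m :: acc.map (· + (m + 1))) []).map (· + n) := by
  induction l generalizing n with
  | nil => rfl
  | cons m l ih =>
    simp only [raise', List.foldr_cons, List.map_cons, List.map_map]
    rw [ih]
    congr 2
    funext x
    simp only [Function.comp_apply]
    omega

theorem primrec₂_raise' : Primrec₂ raise' := by
  refine (Primrec.list_map
    (Primrec.list_foldr (h := fun (_ : List ℕ × ℕ) (q : ℕ × List ℕ) =>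
        q.1 :: q.2.map (· + (q.1 + 1)))
      Primrec.fst (Primrec.const [])
      (Primrec.list_cons.comp (Primrec.fst.comp Primrec.snd)
        (Primrec.list_map (Primrec.snd.comp Primrec.snd)
          (Primrec.nat_add.comp Primrec.snd
            (Primrec.succ.comp (Primrec.fst.comp (Primrec.snd.comp Primrec.fst)))).to₂)).to₂)
    (Primrec.nat_add.comp Primrec.snd (Primrec.snd.comp Primrec.fst)).to₂).of_eq ?_
  rintro ⟨l, n⟩
  exact (raise'_eq_map_foldr l n).symm

theorem mem_ofNat_finset_iff {z u : ℕ} :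
    z ∈ ofNat (Finset ℕ) u ↔ z ∈ raise' (ofNat (List ℕ) u) 0 := by
  rw [ofNat_of_decode (n := u) rfl]
  simp only [eqv, Equiv.symm_mk, raise'Finset, Equiv.coe_fn_mk, Finset.mem_map_equiv, encode_nat]
  rfl

theorem primrecRel_mem_ofNat_finset : PrimrecRel fun z u : ℕ => z ∈ ofNat (Finset ℕ) u :=
  ((PrimrecRel.exists_mem_list Primrec.eq).comp₂
    ((primrec₂_raise'.comp (Primrec.ofNat _) (Primrec.const 0)).comp₂ Primrec₂.right)
    Primrec₂.left).of_eq fun z u => by simp [mem_ofNat_finset_iff]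

end Denumerable

section REPred

variable {α β : Type*} [Primcodable α] [Primcodable β]

theorem REPred.comp {p : β → Prop} (hp : REPred p) {f : α → β} (hf : Computable f) :
    REPred fun a => p (f a) :=
  Partrec.comp hp hf

theorem PrimrecRel.rePred_exists {R : α → ℕ → Prop} (hR : PrimrecRel R) :
    REPred fun a => ∃ k, R a k := by
  classical
  refine (Partrec.rfind hR.decide.to_comp.partrec₂).dom_re.of_eq fun a => ?_
  simp [Nat.rfind_dom]

theorem REPred.exists_primrecRel_monotone {p : α → Prop} (hp : REPred p) :
    ∃ R : α → ℕ → Prop, PrimrecRel R ∧ (∀ a, Monotone (R a)) ∧ ∀ a, p a ↔ ∃ k, R a k := by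
  obtain ⟨c, hc⟩ := Code.exists_code.1 hp
  refine ⟨fun a k => (Code.evaln k c (encode a)).isSome, ?_, ?_, fun a => ?_⟩
  · exact (Primrec.eq.comp (Primrec.option_isSome.comp
      (Code.primrec_evaln.comp
        ((Primrec.snd.pair (Primrec.const c)).pair (Primrec.encode.comp Primrec.fst))))
      (Primrec.const true))
  · intro a k k' hk h
    obtain ⟨n, hn⟩ := Option.isSome_iff_exists.1 h
    exact Option.isSome_iff_exists.2 ⟨n, Code.evaln_mono hk hn⟩
  · have : p a ↔ (Code.eval c (encode a)).Dom := by
      simp [hc, encodek, Part.assert]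
    simp only [this, Part.dom_iff_mem, Code.evaln_complete, Option.isSome_iff_exists]
    exact exists_comm

end REPred

theorem Finset.forall_mem_exists_iff_exists_forall_mem {ι : Type*} {R : ι → ℕ → Prop}
    (hR : ∀ i, Monotone (R i)) (s : Finset ι) : (∀ i ∈ s, ∃ k, R i k) ↔ ∃ k, ∀ i ∈ s, R i k := by
  refine ⟨fun h => ?_, fun ⟨k, hk⟩ i hi => ⟨k, hk i hi⟩⟩
  have : ∀ i ∈ s, ∀ᶠ k in atTop, R i k := fun i hi =>
    let ⟨k, hk⟩ := h i hi
    eventually_atTop.2 ⟨k, fun _ hk' => hR i hk' hk⟩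
  exact ((eventually_all_finset s).2 this).exists

theorem mem_scottApp_iff_exists_stage {A B : Set ℕ} {RA RB : ℕ → ℕ → Prop}
    (monoA : ∀ y, Monotone (RA y)) (monoB : ∀ z, Monotone (RB z))
    (hA : ∀ y, y ∈ A ↔ ∃ k, RA y k) (hB : ∀ z, z ∈ B ↔ ∃ k, RB z k) (x : ℕ) :
    x ∈ scottApp A B ↔ ∃ u k, RA (Nat.pair x u) k ∧ ∀ z ∈ ofNat (Finset ℕ) u, RB z k := by
  refine exists_congr fun u => ⟨fun ⟨hxu, hsub⟩ => ?_, fun ⟨k, hxu, hsub⟩ => ?_⟩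
  · obtain ⟨k₁, hk₁⟩ := (hA _).1 hxu
    obtain ⟨k₂, hk₂⟩ := (Finset.forall_mem_exists_iff_exists_forall_mem monoB _).1
      fun z hz => (hB z).1 (hsub hz)
    exact ⟨max k₁ k₂, monoA _ (le_max_left _ _) hk₁,
      fun z hz => monoB z (le_max_right _ _) (hk₂ z hz)⟩
  · exact ⟨(hA _).2 ⟨k, hxu⟩, fun z hz => (hB z).2 ⟨k, hsub z hz⟩⟩

def UniformlyRE {α : Type*} [Primcodable α] (A : α → Set ℕ) : Prop :=
  REPred fun q : α × ℕ => q.2 ∈ A q.1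

namespace UniformlyRE

variable {α β : Type*} [Primcodable α] [Primcodable β]

theorem comp {A : β → Set ℕ} (hA : UniformlyRE A) {f : α → β} (hf : Computable f) :
    UniformlyRE fun a => A (f a) :=
  REPred.comp hA ((hf.comp Computable.fst).pair Computable.snd)

theorem const {X : Set ℕ} (hX : REPred (· ∈ X)) : UniformlyRE fun _ : α => X :=
  REPred.comp hX Computable.snd

theorem rePred_mem {A : α → Set ℕ} (hA : UniformlyRE A) (a : α) : REPred (· ∈ A a) :=
  REPred.comp hA ((Computable.const a).pair Computable.id)

theorem ofNat_finset : UniformlyRE fun u => (ofNat (Finset ℕ) u : Set ℕ) :=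
  (primrecRel_mem_ofNat_finset.swap.comp Primrec.fst Primrec.snd).computablePred.to_re

theorem scottApp {A B : α → Set ℕ} (hA : UniformlyRE A) (hB : UniformlyRE B) :
    UniformlyRE fun a => scottApp (A a) (B a) := by
  obtain ⟨RA, hRA, monoA, hA⟩ := REPred.exists_primrecRel_monotone hA
  obtain ⟨RB, hRB, monoB, hB⟩ := REPred.exists_primrecRel_monotone hB
  have hR : PrimrecRel fun (q : α × ℕ) (m : ℕ) =>
      RA (q.1, Nat.pair q.2 m.unpair.1) m.unpair.2 ∧
        ∀ z ∈ raise' (ofNat (List ℕ) m.unpair.1) 0, RB (q.1, z) m.unpair.2 := by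
    have hu : Primrec fun p : (α × ℕ) × ℕ => p.2.unpair.1 :=
      Primrec.fst.comp (Primrec.unpair.comp Primrec.snd)
    have hk : Primrec fun p : (α × ℕ) × ℕ => p.2.unpair.2 :=
      Primrec.snd.comp (Primrec.unpair.comp Primrec.snd)
    refine PrimrecPred.and
      (hRA.comp ((Primrec.fst.comp Primrec.fst).pair
        (Primrec₂.natPair.comp (Primrec.snd.comp Primrec.fst) hu)) hk) ?_
    have hRB' : PrimrecRel fun (z : ℕ) (p : (α × ℕ) × ℕ) => RB (p.1.1, z) p.2.unpair.2 :=
      hRB.comp ((Primrec.fst.comp (Primrec.fst.comp Primrec.snd)).pair Primrec.fst)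
        (hk.comp Primrec.snd)
    exact hRB'.forall_mem_list.comp
      (primrec₂_raise'.comp ((Primrec.ofNat _).comp hu) (Primrec.const 0)) Primrec.id
  refine hR.rePred_exists.of_eq fun ⟨a, x⟩ => ?_
  rw [mem_scottApp_iff_exists_stage (fun y => monoA (a, y)) (fun z => monoB (a, z))
    (fun y => hA (a, y)) (fun z => hB (a, z))]
  simp only [← mem_ofNat_finset_iff]
  exact ⟨fun ⟨m, h⟩ => ⟨_, _, h⟩, fun ⟨u, k, h⟩ => ⟨Nat.pair u k, by simpa using h⟩⟩

end UniformlyRE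

theorem scottApp_mono {A A' B B' : Set ℕ} (hA : A ⊆ A') (hB : B ⊆ B') :
    scottApp A B ⊆ scottApp A' B' := fun _ ⟨u, hu, hsub⟩ => ⟨u, hA hu, hsub.trans hB⟩

theorem exists_finset_subset_scottApp {A B : Set ℕ} (F : Finset ℕ) (hF : ↑F ⊆ scottApp A B) :
    ∃ A' B' : Finset ℕ, ↑A' ⊆ A ∧ ↑B' ⊆ B ∧ ↑F ⊆ scottApp A' B' := by
  induction F using Finset.induction_on with
  | empty => exact ⟨∅, ∅, by simp, by simp, by simp⟩
  | insert x F _ ih =>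
    rw [Finset.coe_insert, Set.insert_subset_iff] at hF
    obtain ⟨⟨u, hxu, hsub⟩, hF⟩ := hF
    obtain ⟨A', B', hA', hB', hF'⟩ := ih hF
    refine ⟨insert (Nat.pair x u) A', ofNat (Finset ℕ) u ∪ B', ?_, ?_, ?_⟩
    · simpa [Set.insert_subset_iff] using ⟨hxu, hA'⟩
    · simpa using ⟨hsub, hB'⟩
    · rw [Finset.coe_insert, Set.insert_subset_iff]
      exact ⟨⟨u, by simp, by simp⟩, hF'.trans (scottApp_mono (by simp) (by simp))⟩

def scottK : Set ℕ := {n | n.unpair.1.unpair.1 ∈ ofNat (Finset ℕ) n.unpair.2}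

def scottS : Set ℕ :=
  {n | n.unpair.1.unpair.1.unpair.1 ∈
    scottApp
      (scottApp (ofNat (Finset ℕ) n.unpair.2) (ofNat (Finset ℕ) n.unpair.1.unpair.1.unpair.2))
      (scottApp (ofNat (Finset ℕ) n.unpair.1.unpair.2)
        (ofNat (Finset ℕ) n.unpair.1.unpair.1.unpair.2))}

@[simp]
theorem pair_mem_scottK {z v u : ℕ} :
    Nat.pair (Nat.pair z v) u ∈ scottK ↔ z ∈ ofNat (Finset ℕ) u := by
  simp [scottK]

@[simp]
theorem pair_mem_scottS {x c b a : ℕ} :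
    Nat.pair (Nat.pair (Nat.pair x c) b) a ∈ scottS ↔
      x ∈ scottApp (scottApp (ofNat (Finset ℕ) a) (ofNat (Finset ℕ) c))
        (scottApp (ofNat (Finset ℕ) b) (ofNat (Finset ℕ) c)) := by
  simp [scottS]

theorem rePred_mem_scottK : REPred (· ∈ scottK) := by
  have h₁ : Computable fun n : ℕ => n.unpair.1 := Computable.fst.comp Computable.unpair
  have h₂ : Computable fun n : ℕ => n.unpair.2 := Computable.snd.comp Computable.unpair
  exact REPred.comp UniformlyRE.ofNat_finset (h₂.pair (h₁.comp h₁))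

theorem rePred_mem_scottS : REPred (· ∈ scottS) := by
  have h₁ : Computable fun n : ℕ => n.unpair.1 := Computable.fst.comp Computable.unpair
  have h₂ : Computable fun n : ℕ => n.unpair.2 := Computable.snd.comp Computable.unpair
  have hD := UniformlyRE.ofNat_finset
  have hfam := ((hD.comp h₂).scottApp (hD.comp (h₂.comp (h₁.comp h₁)))).scottApp
    ((hD.comp (h₂.comp h₁)).scottApp (hD.comp (h₂.comp (h₁.comp h₁))))
  have := REPred.comp hfam (Computable.id.pair (h₁.comp (h₁.comp h₁)))
  exact this.of_eq fun n => Iff.rfl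

theorem scottApp_scottApp_scottK (X Y : Set ℕ) : scottApp (scottApp scottK X) Y = X := by
  ext z
  constructor
  · rintro ⟨v, ⟨u, hK, hu⟩, -⟩
    exact hu (pair_mem_scottK.1 hK)
  · intro hz
    obtain ⟨e, he⟩ := ofNat_surjective (Finset ℕ) ∅
    obtain ⟨s, hs⟩ := ofNat_surjective (Finset ℕ) {z}
    exact ⟨e, ⟨s, by simp [hs], by simpa [hs]⟩, by simp [he]⟩

theorem scottApp_scottApp_scottApp_scottS (X Y Z : Set ℕ) :
    scottApp (scottApp (scottApp scottS X) Y) Z = scottApp (scottApp X Z) (scottApp Y Z) := by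
  ext x
  constructor
  · rintro ⟨c, ⟨b, ⟨a, hS, ha⟩, hb⟩, hc⟩
    exact scottApp_mono (scottApp_mono ha hc) (scottApp_mono hb hc) (pair_mem_scottS.1 hS)
  · intro hx
    obtain ⟨P, Q, hP, hQ, hxPQ⟩ := exists_finset_subset_scottApp {x} (by simpa using hx)
    obtain ⟨a, c₁, ha, hc₁, hPac⟩ := exists_finset_subset_scottApp P hP
    obtain ⟨b, c₂, hb, hc₂, hQbc⟩ := exists_finset_subset_scottApp Q hQ
    obtain ⟨ia, rfl⟩ := ofNat_surjective (Finset ℕ) a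
    obtain ⟨ib, rfl⟩ := ofNat_surjective (Finset ℕ) b
    obtain ⟨ic, hc⟩ := ofNat_surjective (Finset ℕ) (c₁ ∪ c₂)
    refine ⟨ic, ⟨ib, ⟨ia, ?_, ha⟩, hb⟩, by simpa [hc] using ⟨hc₁, hc₂⟩⟩
    rw [pair_mem_scottS, hc]
    exact scottApp_mono
      (hPac.trans (scottApp_mono subset_rfl (by simp)))
      (hQbc.trans (scottApp_mono subset_rfl (by simp))) (hxPQ (by simp))

/-- The combinators `K, S` for Scott's application can be chosen computably
enumerable, and Scott's application preserves computable enumerability; hence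
the c.e. subsets of `ℕ` with Scott's application form a total combinatory
algebra `ℰ`. -/
theorem scott_ce_model :
    (∃ K S : Set ℕ, REPred (· ∈ K) ∧ REPred (· ∈ S) ∧
      ∀ X Y Z : Set ℕ,
        scottApp (scottApp K X) Y = X ∧
        scottApp (scottApp (scottApp S X) Y) Z =
          scottApp (scottApp X Z) (scottApp Y Z)) ∧
    ∀ X Y : Set ℕ, REPred (· ∈ X) → REPred (· ∈ Y) →
      REPred (· ∈ scottApp X Y) :=
  ⟨⟨scottK, scottS, rePred_mem_scottK, rePred_mem_scottS, fun X Y Z =>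
      ⟨scottApp_scottApp_scottK X Y, scottApp_scottApp_scottApp_scottS X Y Z⟩⟩,
    fun _ _ hX hY =>
      ((UniformlyRE.const (α := Unit) hX).scottApp (UniformlyRE.const hY)).rePred_mem ()⟩
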